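/- arXiv:2107.11160 — 2 statements merged into one kernel-verified Lean document; each statement's English description precedes it below -/
import Mathlib

section
/- For all ℓ ≥ 2, the stopping time of 2^ℓ − 1 is at least ℓ, i.e., T^[k](2^ℓ − 1) ≥ 2^ℓ − 1 for all 1 ≤ k < ℓ. -/
def T (n : ℕ) : ℕ := if n % 2 = 0 then n / 2 else (3 * n + 1) / 2

/-- number of binary digits of `n` (for `n ≥ 1`) -/
def numDigits (n : ℕ) : ℕ := Nat.log 2 n + 1

def jp (n : ℕ) : ℕ := T^[numDigits n] n

def syr (x : ℕ) : ℕ := (3 * x + 1) / 2 ^ (padicValNat 2 (3 * x + 1))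

def sjp (n : ℕ) : ℕ := syr^[numDigits n] n

/-! The number `3 ^ j * 2 ^ (m + 1) - 1` is odd and `T` sends it to `3 ^ (j + 1) * 2 ^ m - 1`,
so the `k`-th iterate of `2 ^ ℓ - 1` is `3 ^ k * 2 ^ (ℓ - k) - 1 ≥ 2 ^ ℓ - 1` for every `k ≤ ℓ`. -/

theorem T_two_mul_add_one (n : ℕ) : T (2 * n + 1) = 3 * n + 2 := by
  unfold T
  rw [if_neg (by omega)]
  omega

theorem T_pow_three_mul_pow_two_sub_one (j m : ℕ) :
    T (3 ^ j * 2 ^ (m + 1) - 1) = 3 ^ (j + 1) * 2 ^ m - 1 := by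
  have hpos : 0 < 3 ^ j * 2 ^ m := by positivity
  have hodd : 3 ^ j * 2 ^ (m + 1) - 1 = 2 * (3 ^ j * 2 ^ m - 1) + 1 := by
    rw [pow_succ, ← mul_assoc]
    omega
  rw [hodd, T_two_mul_add_one, pow_succ, mul_right_comm]
  omega

theorem T_iterate_pow_three_mul_pow_two_sub_one (j m k : ℕ) :
    T^[k] (3 ^ j * 2 ^ (m + k) - 1) = 3 ^ (j + k) * 2 ^ m - 1 := by
  induction k generalizing j with
  | zero => rfl
  | succ k ih =>
    rw [Function.iterate_succ_apply, ← add_assoc, T_pow_three_mul_pow_two_sub_one, ih,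
      add_right_comm, add_assoc]

theorem T_iterate_pow_two_sub_one {ℓ k : ℕ} (hk : k ≤ ℓ) :
    T^[k] (2 ^ ℓ - 1) = 3 ^ k * 2 ^ (ℓ - k) - 1 := by
  simpa [Nat.sub_add_cancel hk] using T_iterate_pow_three_mul_pow_two_sub_one 0 (ℓ - k) k

theorem stopping_time_mersenne_ge_general (ℓ : ℕ) :
    ∀ k, 1 ≤ k → k < ℓ → 2 ^ ℓ - 1 ≤ T^[k] (2 ^ ℓ - 1) := by
  intro k _ hkℓ
  rw [T_iterate_pow_two_sub_one hkℓ.le]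
  have h : 2 ^ ℓ ≤ 3 ^ k * 2 ^ (ℓ - k) :=
    calc 2 ^ ℓ = 2 ^ k * 2 ^ (ℓ - k) := by rw [← pow_add, Nat.add_sub_cancel' hkℓ.le]
      _ ≤ 3 ^ k * 2 ^ (ℓ - k) := by gcongr; norm_num
  omega

theorem stopping_time_mersenne_ge (ℓ : ℕ) (hℓ : 2 ≤ ℓ) :
    ∀ k, 1 ≤ k → k < ℓ → 2 ^ ℓ - 1 ≤ T^[k] (2 ^ ℓ - 1) :=
  stopping_time_mersenne_ge_general ℓ
end

section
/- For n ≥ 3, if the falling time ft(n) is finite (i.e., some iterate of jp applied to n falls below n) for every n ≥ 3, then for every n ≥ 2 some iterate of T applied to n falls below n. -/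
lemma Function.exists_iterate_eq_iterate_of_eq_iterate {α : Type*} {f g : α → α} {c : α → ℕ}
    (hc : ∀ x, 1 ≤ c x) (hf : ∀ x, f x = g^[c x] x) (k : ℕ) (x : α) :
    ∃ m, k ≤ m ∧ f^[k] x = g^[m] x := by
  induction k with
  | zero => exact ⟨0, le_rfl, rfl⟩
  | succ k ih =>
    obtain ⟨m, hkm, hm⟩ := ih
    refine ⟨c (f^[k] x) + m, by linarith [hc (f^[k] x)], ?_⟩
    rw [Function.iterate_succ_apply', hf, Function.iterate_add_apply, ← hm]

lemma exists_jp_iterate_eq_T_iterate (k n : ℕ) : ∃ m, k ≤ m ∧ jp^[k] n = T^[m] n :=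
  Function.exists_iterate_eq_iterate_of_eq_iterate (fun _ => Nat.le_add_left 1 _) (fun _ => rfl) k n

theorem ft_finite_implies_collatz
    (h : ∀ n, 3 ≤ n → ∃ k, 1 ≤ k ∧ jp^[k] n < n) :
    ∀ n, 2 ≤ n → ∃ s, 1 ≤ s ∧ T^[s] n < n := by
  intro n hn
  rcases hn.eq_or_lt with rfl | hn
  · exact ⟨1, le_rfl, by decide⟩
  · obtain ⟨k, hk, hfall⟩ := h n hn
    obtain ⟨m, hkm, hjp⟩ := exists_jp_iterate_eq_T_iterate k n
    exact ⟨m, hk.trans hkm, hjp ▸ hfall⟩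
end
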